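/- Let σ : ℝ → ℝ be strictly increasing with 0 ≤ σ(t) ≤ 1 and σ(t) + σ(−t) = 1 for all t ∈ ℝ, and let x, y ∈ ℝ with x ≠ y. Then the 2 × 2 matrix P with P₁₁ = P₂₂ = ⌊σ(y − x)⌉ and P₁₂ = P₂₁ = ⌊σ(x − y)⌉ has all entries in {0, 1} and is doubly stochastic; in fact P is the identity matrix if x < y and the transposition matrix if x > y. -/
import Mathlib


/-- A `2 × 2` real matrix is doubly stochastic if all entries are nonnegative
and every row sum and every column sum equals `1`. -/
def DoublyStochastic (A : Matrix (Fin 2) (Fin 2) ℝ) : Prop :=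
  (∀ i j, 0 ≤ A i j) ∧ (∀ i, ∑ j, A i j = 1) ∧ (∀ j, ∑ i, A i j = 1)

lemma round_eq_one_of (r : ℝ) (h1 : 1/2 < r) (h2 : r ≤ 1) : round r = 1 := by
  rw [round_eq]
  have : ⌊r + 1/2⌋ = 1 := by
    apply Int.floor_eq_iff.mpr
    constructor <;> push_cast <;> linarith
  simpa using this

lemma round_eq_zero_of (r : ℝ) (h1 : 0 ≤ r) (h2 : r < 1/2) : round r = 0 := by
  rw [round_eq]
  apply Int.floor_eq_iff.mpr
  constructor <;> push_cast <;> linarith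

theorem errorFree_hard_permutation_matrix
    (σ : ℝ → ℝ) (hmono : StrictMono σ)
    (h0 : ∀ t, 0 ≤ σ t) (h1 : ∀ t, σ t ≤ 1)
    (hσ : ∀ t, σ t + σ (-t) = 1)
    (x y : ℝ) (hxy : x ≠ y)
    (P : Matrix (Fin 2) (Fin 2) ℝ)
    (hP : P = !![(round (σ (y - x)) : ℝ), (round (σ (x - y)) : ℝ);
                 (round (σ (x - y)) : ℝ), (round (σ (y - x)) : ℝ)]) :
    (∀ i j, P i j = 0 ∨ P i j = 1) ∧ DoublyStochastic P ∧
      (x < y → P = 1) ∧ (y < x → P = !![0, 1; 1, 0]) := by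
  have hσ0 : σ 0 = 1/2 := by have := hσ 0; rw [neg_zero] at this; linarith
  rcases lt_or_gt_of_ne hxy with h | h
  · -- x < y
    have ha : 1/2 < σ (y - x) := by
      have := hmono (show (0:ℝ) < y - x by linarith); rwa [hσ0] at this
    have hb : σ (x - y) < 1/2 := by
      have := hmono (show x - y < (0:ℝ) by linarith)
      rwa [hσ0] at this
    have r1 : round (σ (y - x)) = 1 := round_eq_one_of _ ha (h1 _)
    have r0 : round (σ (x - y)) = 0 := round_eq_zero_of _ (h0 _) hb
    have hP1 : P = 1 := by
      rw [hP, r1, r0]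
      ext i j
      fin_cases i <;> fin_cases j <;> simp [Matrix.one_apply]
    refine ⟨?_, ⟨?_, ?_, ?_⟩, fun _ => hP1, fun hc => absurd h (not_lt.mpr hc.le)⟩ <;>
      intro i <;> try intro j
    all_goals fin_cases i <;> try fin_cases j
    all_goals simp [hP1, Matrix.one_apply, Fin.sum_univ_two]
  · -- y < x
    have ha : σ (y - x) < 1/2 := by
      have := hmono (show y - x < (0:ℝ) by linarith); rwa [hσ0] at this
    have hb : 1/2 < σ (x - y) := by
      have := hmono (show (0:ℝ) < x - y by linarith); rwa [hσ0] at this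
    have r0 : round (σ (y - x)) = 0 := round_eq_zero_of _ (h0 _) ha
    have r1 : round (σ (x - y)) = 1 := round_eq_one_of _ hb (h1 _)
    have hP1 : P = !![0, 1; 1, 0] := by rw [hP, r1, r0]; norm_num
    refine ⟨?_, ⟨?_, ?_, ?_⟩, fun hc => absurd h (not_lt.mpr hc.le), fun _ => hP1⟩ <;>
      intro i <;> try intro j
    all_goals fin_cases i <;> try fin_cases j
    all_goals simp [hP1, Fin.sum_univ_two]
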